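/- Suppose P_N closure matrix A (Legendre Jacobi matrix of size (N+1)) and symmetrizer A₀ = diag(1,3,…,2N+1). Then for any eigenvalue λ of A, |λ| ≤ 1. Equivalently, the spectral radius of A is at most 1. -/

import Mathlib

/-!
Row `i` of `pnMatrix N` has nonnegative entries `(i+1)/(2i+1)` and `i/(2i+1)` (at most), so its
sum is at most `1`. Hence the `ℓ∞`-operator norm of the matrix (maximal absolute row sum) is at
most `1`, and every eigenvalue is bounded in modulus by this submultiplicative norm.
-/

open Matrix

noncomputable def pnMatrix (N : ℕ) : Matrix (Fin (N + 1)) (Fin (N + 1)) ℝ := fun i j =>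
  if (j : ℕ) = (i : ℕ) + 1 then (((i : ℕ) : ℝ) + 1) / (2 * ((i : ℕ) : ℝ) + 1)
  else if (i : ℕ) = (j : ℕ) + 1 then ((i : ℕ) : ℝ) / (2 * ((i : ℕ) : ℝ) + 1)
  else 0

theorem Fintype.sum_ite_zero_le_of_subsingleton {ι R : Type*} [Fintype ι] [AddCommMonoid R]
    [PartialOrder R] [IsOrderedAddMonoid R] {P : ι → Prop} [DecidablePred P]
    (hP : {j | P j}.Subsingleton) {c : R} (hc : 0 ≤ c) :
    ∑ j, (if P j then c else 0) ≤ c := by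
  rw [Finset.sum_ite, Finset.sum_const_zero, add_zero, Finset.sum_const]
  calc _ ≤ 1 • c := nsmul_le_nsmul_left hc <|
          Finset.card_le_one.2 fun j hj k hk => hP (by simpa using hj) (by simpa using hk)
    _ = c := one_nsmul c

section

attribute [local instance] Matrix.linftyOpNormedRing Matrix.linftyOpNormedAlgebra

theorem Matrix.norm_le_of_mem_spectrum_of_forall_sum_norm_le {n 𝕜 : Type*} [Fintype n]
    [DecidableEq n] [Nonempty n] [RCLike 𝕜] {A : Matrix n n 𝕜} {r : ℝ}
    (hA : ∀ i, ∑ j, ‖A i j‖ ≤ r) {μ : 𝕜} (hμ : μ ∈ spectrum 𝕜 A) : ‖μ‖ ≤ r := by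
  obtain ⟨i⟩ := ‹Nonempty n›
  lift r to NNReal using (Finset.sum_nonneg fun j _ => norm_nonneg _).trans (hA i)
  refine (spectrum.norm_le_norm_of_mem hμ).trans ?_
  rw [linfty_opNorm_def]
  exact_mod_cast Finset.sup_le fun i _ => NNReal.coe_le_coe.1 (by simpa using hA i)

end

variable {N : ℕ}

theorem pnMatrix_nonneg (i j : Fin (N + 1)) : 0 ≤ pnMatrix N i j := by
  unfold pnMatrix
  split_ifs <;> positivity

theorem pnMatrix_apply_eq_add (i j : Fin (N + 1)) :
    pnMatrix N i j =
      (if (j : ℕ) = i + 1 then ((i : ℝ) + 1) / (2 * i + 1) else 0) +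
        if (i : ℕ) = j + 1 then (i : ℝ) / (2 * i + 1) else 0 := by
  unfold pnMatrix
  split_ifs <;> first | omega | simp

theorem pnMatrix_sum_row_le_one (i : Fin (N + 1)) : ∑ j, pnMatrix N i j ≤ 1 := by
  have hd : (0 : ℝ) < 2 * i + 1 := by positivity
  calc ∑ j, pnMatrix N i j
      = (∑ j : Fin (N + 1), if (j : ℕ) = i + 1 then ((i : ℝ) + 1) / (2 * i + 1) else 0) +
          ∑ j : Fin (N + 1), if (i : ℕ) = j + 1 then (i : ℝ) / (2 * i + 1) else 0 := by
        simp only [pnMatrix_apply_eq_add, Finset.sum_add_distrib]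
    _ ≤ ((i : ℝ) + 1) / (2 * i + 1) + (i : ℝ) / (2 * i + 1) := by
        gcongr <;> refine Fintype.sum_ite_zero_le_of_subsingleton ?_ (by positivity) <;>
          exact fun j hj k hk => Fin.ext (by simp only [Set.mem_ofPred_eq] at hj hk; omega)
    _ = 1 := by field_simp; ring

/-- Every (complex) eigenvalue `μ` of the `P_N` closure matrix satisfies `|μ| ≤ 1`:
the spectral radius of `A` is at most `1`. -/
theorem pn_spectral_radius_le_one (N : ℕ) :
    ∀ μ ∈ spectrum ℂ ((pnMatrix N).map (Complex.ofReal)), ‖μ‖ ≤ 1 := by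
  refine fun μ => Matrix.norm_le_of_mem_spectrum_of_forall_sum_norm_le fun i => ?_
  simpa only [map_apply, Complex.norm_real, Real.norm_of_nonneg (pnMatrix_nonneg _ _)]
    using pnMatrix_sum_row_le_one i
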